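/- arXiv:1506.08264 — 3 statements merged into one kernel-verified Lean document; each statement's English description precedes it below -/
import Mathlib

section
/- Let A be a symmetric positive-definite checkerboard matrix of size 2n+1 with a_{i,j} = (-1)^{(i-j)/2} a_{(i+j)/2,(i+j)/2} for i + j even. Let Ƃ be the 2nƗ2n matrix obtained from A by deleting the first row and the last column. Then Ƃ is skew-symmetric and invertible, hence det(Ƃ) > 0. -/
/-!
Write `B i j = A (i + 1) j` for the matrix obtained by deleting the first row and last column.
The entries `B j i` and `B i j` lie on the same antidiagonal of `A`, so by the sign rule they are
`±` the same diagonal entry, with exponents `(j + 1 - i) / 2` and `(i + 1 - j) / 2` adding up to `1`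
when they are nonzero: `B` is skew-symmetric. Listing the even indices of `B` before the odd ones,
the checkerboard pattern makes `B` block antidiagonal, `[[0, X], [-Xᵀ, 0]]`, where `X` is the
principal submatrix of `A` on the (0-based) odd indices. Hence `det B = (det X) ^ 2`, which is
positive since `X` inherits positive definiteness from `A`.
-/

theorem neg_one_zpow_eq_neg_of_add_eq_one {R : Type*} [DivisionRing R] {e₁ e₂ : ℤ}
    (h : e₁ + e₂ = 1) : (-1 : R) ^ e₁ = -(-1) ^ e₂ := by
  obtain rfl : e₁ = 1 - e₂ := by omega
  rw [zpow_sub₀ (neg_ne_zero.2 one_ne_zero), zpow_one, div_eq_mul_inv, neg_one_mul, ← inv_zpow,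
    inv_neg, inv_one]

def finSumFinEquivEvenOdd (n : ℕ) : Fin n ⊕ Fin n ≃ Fin (2 * n) where
  toFun := Sum.elim (fun p ↦ ⟨2 * p, by omega⟩) (fun p ↦ ⟨2 * p + 1, by omega⟩)
  invFun k := if (k : ℕ) % 2 = 0 then .inl ⟨k / 2, by omega⟩ else .inr ⟨k / 2, by omega⟩
  left_inv := by rintro (p | p) <;> simp [Fin.ext_iff]; omega
  right_inv k := by by_cases hk : (k : ℕ) % 2 = 0 <;> (simp [hk, Fin.ext_iff]; omega)

def finOddEmbedding (n : ℕ) : Fin n ↪ Fin (2 * n + 1) where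
  toFun p := ⟨2 * p + 1, by omega⟩
  inj' p q h := by simpa [Fin.ext_iff] using h

namespace Matrix

variable {R : Type*} {m : ℕ}

def IsCheckerboard [Zero R] (A : Matrix (Fin m) (Fin m) R) : Prop :=
  ∀ i j : Fin m, Odd ((i : ℕ) + (j : ℕ)) → A i j = 0

def IsAntidiagonalAlternating [DivisionRing R] (A : Matrix (Fin m) (Fin m) R) : Prop :=
  ∀ i j : Fin m, Even ((i : ℕ) + (j : ℕ)) →
    A i j = (-1 : R) ^ ((((i : ℕ) : ℤ) - ((j : ℕ) : ℤ)) / 2) *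
      A ⟨((i : ℕ) + (j : ℕ)) / 2, by have := i.isLt; have := j.isLt; omega⟩
        ⟨((i : ℕ) + (j : ℕ)) / 2, by have := i.isLt; have := j.isLt; omega⟩

theorem transpose_submatrix_succ_castSucc_eq_neg [DivisionRing R]
    {A : Matrix (Fin (m + 1)) (Fin (m + 1)) R} (hA₀ : A.IsCheckerboard)
    (hA₁ : A.IsAntidiagonalAlternating) :
    (A.submatrix Fin.succ Fin.castSucc)ᵀ = -A.submatrix Fin.succ Fin.castSucc := by
  ext i j
  simp only [transpose_apply, submatrix_apply, neg_apply]
  obtain ⟨k, hk | hk⟩ := Nat.even_or_odd' ((i : ℕ) + j)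
  · rw [hA₀ j.succ i.castSucc ⟨k, by simp only [Fin.val_succ, Fin.val_castSucc]; omega⟩,
      hA₀ i.succ j.castSucc ⟨k, by simp only [Fin.val_succ, Fin.val_castSucc]; omega⟩, neg_zero]
  · rw [hA₁ j.succ i.castSucc ⟨k + 1, by simp only [Fin.val_succ, Fin.val_castSucc]; omega⟩,
      hA₁ i.succ j.castSucc ⟨k + 1, by simp only [Fin.val_succ, Fin.val_castSucc]; omega⟩,
      neg_one_zpow_eq_neg_of_add_eq_one, neg_mul]
    · congr 3 <;> simp only [Fin.mk.injEq, Fin.val_succ, Fin.val_castSucc] <;> omega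
    · simp only [Fin.val_succ, Fin.val_castSucc]
      omega

section Blocks

variable {l S : Type*} [Fintype l] [DecidableEq l] [CommRing S]

theorem det_fromBlocks_zero_one_neg_one_zero :
    (fromBlocks 0 1 (-1) 0 : Matrix (l ⊕ l) (l ⊕ l) S).det = 1 := by
  have hfactor : (fromBlocks 0 1 (-1) 0 : Matrix (l ⊕ l) (l ⊕ l) S) =
      fromBlocks 1 1 0 1 * fromBlocks 1 0 (-1) 1 * fromBlocks 1 1 0 1 := by
    simp [fromBlocks_multiply]
  rw [hfactor, det_mul, det_mul, det_fromBlocks_zero₂₁, det_fromBlocks_zero₁₂]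
  simp

theorem det_fromBlocks_zero_neg_transpose (X : Matrix l l S) :
    (fromBlocks 0 X (-Xᵀ) 0).det = X.det ^ 2 := by
  have hfactor : fromBlocks 0 X (-Xᵀ) 0 = fromBlocks X 0 0 Xᵀ * fromBlocks 0 1 (-1) 0 := by
    simp [fromBlocks_multiply]
  rw [hfactor, det_mul, det_fromBlocks_zero₂₁, det_transpose,
    det_fromBlocks_zero_one_neg_one_zero, mul_one, sq]

theorem det_eq_det_toBlocks₁₂_sq {N : Matrix (l ⊕ l) (l ⊕ l) S} (hN : Nᵀ = -N)
    (h₁₁ : N.toBlocks₁₁ = 0) (h₂₂ : N.toBlocks₂₂ = 0) : N.det = N.toBlocks₁₂.det ^ 2 := by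
  have h₂₁ : N.toBlocks₂₁ = -N.toBlocks₁₂ᵀ := by
    ext i j
    exact congrFun₂ hN (.inl j) (.inr i)
  conv_lhs => rw [← fromBlocks_toBlocks N, h₁₁, h₂₂, h₂₁]
  exact det_fromBlocks_zero_neg_transpose _

end Blocks

theorem det_submatrix_succ_castSucc_eq_sq {n : ℕ} {S : Type*} [CommRing S]
    {A : Matrix (Fin (2 * n + 1)) (Fin (2 * n + 1)) S} (hA : A.IsCheckerboard)
    (hskew : (A.submatrix Fin.succ Fin.castSucc)ᵀ = -A.submatrix Fin.succ Fin.castSucc) :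
    (A.submatrix Fin.succ Fin.castSucc).det =
      (A.submatrix (finOddEmbedding n) (finOddEmbedding n)).det ^ 2 := by
  rw [← det_submatrix_equiv_self (finSumFinEquivEvenOdd n), det_eq_det_toBlocks₁₂_sq]
  · rfl
  · rw [transpose_submatrix, hskew]
    rfl
  · ext p q
    exact hA _ _ ⟨p + q, by simp [finSumFinEquivEvenOdd]; omega⟩
  · ext p q
    exact hA _ _ ⟨p + q + 1, by simp [finSumFinEquivEvenOdd]; omega⟩

end Matrix

theorem deleted_submatrix_skew_invertible (n : ℕ)
    (A : Matrix (Fin (2*n+1)) (Fin (2*n+1)) ℝ)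
    (hpd : A.PosDef)
    (hcheck : ∀ i j : Fin (2*n+1), Odd ((i : ℕ) + (j : ℕ)) → A i j = 0)
    (hstruct : ∀ i j : Fin (2*n+1), Even ((i : ℕ) + (j : ℕ)) →
      A i j = (-1 : ℝ) ^ ((((i : ℕ) : ℤ) - ((j : ℕ) : ℤ)) / 2) *
        A ⟨((i : ℕ) + (j : ℕ)) / 2, by have := i.isLt; have := j.isLt; omega⟩
          ⟨((i : ℕ) + (j : ℕ)) / 2, by have := i.isLt; have := j.isLt; omega⟩) :
    Matrix.transpose (A.submatrix Fin.succ Fin.castSucc) = -(A.submatrix Fin.succ Fin.castSucc) ∧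
    IsUnit (A.submatrix Fin.succ Fin.castSucc) ∧
    0 < (A.submatrix Fin.succ Fin.castSucc).det := by
  have hskew := Matrix.transpose_submatrix_succ_castSucc_eq_neg hcheck hstruct
  have hdet : 0 < (A.submatrix Fin.succ Fin.castSucc).det := by
    rw [Matrix.det_submatrix_succ_castSucc_eq_sq hcheck hskew]
    exact pow_pos (hpd.submatrix (finOddEmbedding n).injective).det_pos 2
  exact ⟨hskew, (Matrix.isUnit_iff_isUnit_det _).2 hdet.ne'.isUnit, hdet⟩
end

section
/- For every N ≄ 1, the combinatorial identity āˆ‘_{k=0}^{N-1} C(2N, 2k) · (-1)^{N-k} (2N-2k-1)!/(2^{2N-2k-1}(N-1-k)!) · (2k)!/(2^{2k} k!) = āˆ’(2N)!/(2^{2N} N!) holds. -/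
/-!
Write `g m = (2m)! / (2^(2m) m!)`. The odd-index factor of the summand is `g (N - k)`, and
`C(2N, 2k) g(N - k) g(k) = g(N) C(N, k)`, so the sum is `g N` times the truncated alternating
binomial sum `∑_{k < N} (-1)^(N-k) C(N, k)`, which is `(1 - 1)^N - 1 = -1`.
-/

open Finset

theorem sum_range_neg_one_pow_sub_mul_choose {R : Type*} [CommRing R] {n : ℕ} (hn : n ≠ 0) :
    ∑ k ∈ range n, (-1 : R) ^ (n - k) * n.choose k = -1 := by
  have h := add_pow (1 : R) (-1) n
  rw [add_neg_cancel, zero_pow hn, sum_range_succ] at h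
  simp only [one_pow, one_mul, Nat.sub_self, pow_zero, Nat.choose_self, Nat.cast_one] at h
  linear_combination -h

section HalfFactorialRatio

variable {K : Type*} [Field K] [CharZero K]

theorem odd_factorial_div_eq_factorial_div (j : ℕ) :
    ((2 * j + 1).factorial : K) / (2 ^ (2 * j + 1) * j.factorial)
      = (2 * (j + 1)).factorial / (2 ^ (2 * (j + 1)) * (j + 1).factorial) := by
  rw [show 2 * (j + 1) = 2 * j + 1 + 1 by ring, Nat.factorial_succ (2 * j + 1),
    Nat.factorial_succ j]
  push_cast
  field_simp
  ring

theorem choose_mul_factorial_div_mul_factorial_div {n k : ℕ} (hk : k ≤ n) :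
    ((2 * n).choose (2 * k) : K)
        * ((2 * (n - k)).factorial / (2 ^ (2 * (n - k)) * (n - k).factorial))
        * ((2 * k).factorial / (2 ^ (2 * k) * k.factorial))
      = (2 * n).factorial / (2 ^ (2 * n) * n.factorial) * n.choose k := by
  have h2 : 2 * k ≤ 2 * n := by omega
  have hsub : 2 * (n - k) = 2 * n - 2 * k := by omega
  have hpow : (2 : K) ^ (2 * n) = 2 ^ (2 * (n - k)) * 2 ^ (2 * k) := by
    rw [← pow_add]; congr 1; omega
  rw [Nat.cast_choose K h2, Nat.cast_choose K hk, ← hsub, hpow]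
  field_simp [Nat.factorial_ne_zero]

end HalfFactorialRatio

theorem combinatorial_identity (N : ℕ) (hN : 1 ≤ N) :
    ∑ k ∈ Finset.range N,
      ((2*N).choose (2*k) : ℝ) *
        ((-1 : ℝ) ^ (N-k) * (Nat.factorial (2*N-2*k-1)) /
          (2 ^ (2*N-2*k-1) * (Nat.factorial (N-1-k)))) *
        ((Nat.factorial (2*k)) / (2 ^ (2*k) * (Nat.factorial k)))
      = -(Nat.factorial (2*N)) / (2 ^ (2*N) * (Nat.factorial N)) := by
  calc _ = ∑ k ∈ range N, ((2 * N).factorial / (2 ^ (2 * N) * N.factorial) : ℝ)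
          * ((-1) ^ (N - k) * N.choose k) := sum_congr rfl fun k hk => ?_
    _ = _ := by rw [← mul_sum, sum_range_neg_one_pow_sub_mul_choose (by omega)]; ring
  obtain ⟨j, hj⟩ := Nat.exists_eq_add_of_lt (mem_range.1 hk)
  have hodd : 2 * N - 2 * k - 1 = 2 * j + 1 := by omega
  have hpred : N - 1 - k = j := by omega
  have hNk : N - k = j + 1 := by omega
  rw [hodd, hpred, mul_div_assoc, odd_factorial_div_eq_factorial_div, ← hNk]
  linear_combination (-1 : ℝ) ^ (N - k) * choose_mul_factorial_div_mul_factorial_div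
    (K := ℝ) (mem_range.1 hk).le
end

section
/- Let φ̃ ∈ C^k(𝕋, ℝ) be a kernel on the torus, and for 0 ≤ j ≤ k set φ_j = φ̃^{(j)}. Then the family (φ_0, …, φ_k) is linearly independent in L²(𝕋) if and only if φ̃ has at least k+1 non-zero Fourier coefficients. -/
/-!
Writing `c_n` for the Fourier coefficients on `[a, b]` and `λ_n = 2πin / (b - a)`, integration by
parts gives `c_n(f⁽ʲ⁾) = λ_nʲ c_n(f)`, so `∑ a_j f⁽ʲ⁾` has coefficients `P(λ_n) c_n(f)` with
`P = ∑ a_j Xʲ`. A continuous periodic function is determined by its Fourier coefficients, hence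
`∑ a_j f⁽ʲ⁾ = 0` iff `P` vanishes at every `λ_n` with `c_n(f) ≠ 0`. The `λ_n` are distinct, so a
polynomial of degree `≤ k` vanishing at `k + 1` of them is zero (Vandermonde), whereas `≤ k` of
them are the roots of the nonzero polynomial `∏ (X - λ_n)`. Complex coefficients `a_j` may be
used throughout, because real and imaginary parts of a complex relation between real functions
are real relations.
-/

open Filter intervalIntegral

open Complex MeasureTheory Polynomial Real Set Function
open scoped Interval

theorem linearIndependent_ofReal_comp_iff {ι X : Type*} [Fintype ι] {v : ι → X → ℝ} :
    LinearIndependent ℂ (fun i x ↦ (v i x : ℂ)) ↔ LinearIndependent ℝ v := by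
  simp only [Fintype.linearIndependent_iff, funext_iff, Finset.sum_apply, Pi.smul_apply,
    smul_eq_mul, Pi.zero_apply]
  constructor
  · intro h g hg i
    exact_mod_cast h (fun i ↦ g i) (fun x ↦ by exact_mod_cast hg x) i
  · intro h g hg i
    have hre := h (fun i ↦ (g i).re) fun x ↦ by simpa [re_sum] using congrArg re (hg x)
    have him := h (fun i ↦ (g i).im) fun x ↦ by simpa [im_sum] using congrArg im (hg x)
    exact Complex.ext (hre i) (him i)

theorem exists_sum_mul_pow_eq_zero_of_card_lt {ι R : Type*} [CommRing R] [Nontrivial R]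
    (x : ι → R) {s : Finset ι} {m : ℕ} (hs : s.card < m) :
    ∃ c : Fin m → R, (∃ j, c j ≠ 0) ∧ ∀ i ∈ s, ∑ j : Fin m, c j * x i ^ (j : ℕ) = 0 := by
  set q : R[X] := ∏ i ∈ s, (X - C (x i))
  have hdeg : q.natDegree < m := by rwa [natDegree_finsetProd_X_sub_C_eq_card]
  refine ⟨fun j ↦ q.coeff j, ⟨⟨q.natDegree, hdeg⟩, ?_⟩, fun i hi ↦ ?_⟩
  · exact leadingCoeff_ne_zero.2 (monic_prod_X_sub_C x s).ne_zero
  · rw [Fin.sum_univ_eq_sum_range (fun j ↦ q.coeff j * x i ^ j), ← eval_eq_sum_range' hdeg,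
      eval_prod]
    exact Finset.prod_eq_zero hi (by simp)

theorem forall_sum_mul_pow_eq_zero_iff {ι R : Type*} [CommRing R] [IsDomain R] {x : ι → R}
    (hx : Injective x) (p : ι → Prop) (m : ℕ) :
    (∀ c : Fin m → R, (∀ i, p i → ∑ j, c j * x i ^ (j : ℕ) = 0) → ∀ j, c j = 0) ↔
      ∃ s : Finset ι, m ≤ s.card ∧ ∀ i ∈ s, p i := by
  constructor
  · intro h
    by_contra! hsmall
    have hfin : {i | p i}.Finite := by
      by_contra hinf
      obtain ⟨t, hts, htc⟩ := Set.Infinite.exists_subset_card_eq hinf m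
      obtain ⟨i, hi, hpi⟩ := hsmall t htc.ge
      exact hpi (hts hi)
    have hcard : hfin.toFinset.card < m := by
      by_contra! hle
      obtain ⟨i, hi, hpi⟩ := hsmall _ hle
      exact hpi (hfin.mem_toFinset.1 hi)
    obtain ⟨c, ⟨j, hj⟩, hc⟩ := exists_sum_mul_pow_eq_zero_of_card_lt x hcard
    exact hj (h c (fun i hi ↦ hc i (hfin.mem_toFinset.2 hi)) j)
  · rintro ⟨s, hs, hps⟩ c hc
    obtain ⟨t, hts, htc⟩ := Finset.exists_subset_card_eq hs
    let e := t.equivFinOfCardEq htc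
    have hc_zero := Matrix.eq_zero_of_forall_index_sum_mul_pow_eq_zero
      (hx.comp (Subtype.val_injective.comp e.symm.injective))
      (fun k ↦ hc _ (hps _ (hts (e.symm k).2)))
    simp [hc_zero]

theorem Function.Periodic.deriv {E : Type*} [NormedAddCommGroup E] [NormedSpace ℝ E]
    {f : ℝ → E} {c : ℝ} (h : Periodic f c) : Periodic (deriv f) c := fun x ↦ by
  rw [← deriv_comp_add_const, h.funext]

theorem Function.Periodic.iteratedDeriv {E : Type*} [NormedAddCommGroup E] [NormedSpace ℝ E]
    {f : ℝ → E} {c : ℝ} (h : Periodic f c) (j : ℕ) : Periodic (iteratedDeriv j f) c := by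
  induction j with
  | zero => simpa
  | succ j ih => simpa [iteratedDeriv_succ] using ih.deriv

theorem Function.Periodic.eq_zero_of_fourierCoeffOn_eq_zero {a b : ℝ} (hab : a < b) {f : ℝ → ℂ}
    (hf : Continuous f) (hper : Periodic f (b - a)) (h : ∀ n, fourierCoeffOn hab f n = 0) :
    f = 0 := by
  have hT : 0 < b - a := sub_pos.2 hab
  have : Fact (0 < b - a) := ⟨hT⟩
  let F : C(AddCircle (b - a), ℂ) :=
    ⟨AddCircle.liftIoc (b - a) a f, AddCircle.liftIoc_continuous (hper a).symm hf.continuousOn⟩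
  have hF : F = 0 := by
    refine ContinuousMap.toLp_injective (p := 2) (𝕜 := ℂ) AddCircle.haarAddCircle ?_
    rw [map_zero]
    refine fourierBasis.repr.injective (lp.ext (funext fun n ↦ ?_))
    rw [map_zero, fourierBasis_repr, fourierCoeff_toLp]
    exact h n
  ext x
  obtain ⟨m, hm⟩ : ∃ m : ℤ, x - m • (b - a) ∈ Ioc a (a + (b - a)) :=
    ⟨_, sub_toIocDiv_zsmul_mem_Ioc hT a x⟩
  calc f x = f (x - m • (b - a)) := (hper.sub_zsmul_eq m).symm
    _ = F (x - m • (b - a) : ℝ) := (AddCircle.liftIoc_coe_apply hm).symm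
    _ = 0 := by rw [hF]; rfl

theorem fourierCoeffOn_zero_one_eq_integral (f : ℝ → ℂ) (n : ℤ) :
    fourierCoeffOn zero_lt_one f n = ∫ x in (0 : ℝ)..1, f x * exp (-(2 * π * n * x : ℝ) * I) := by
  rw [fourierCoeffOn_eq_integral]
  simp only [sub_zero, div_one, one_smul, fourier_coe_apply]
  refine intervalIntegral.integral_congr fun x _ ↦ ?_
  rw [smul_eq_mul, mul_comm]
  push_cast
  ring_nf

section FourierCoeffOn

variable {a b : ℝ} (hab : a < b)

theorem fourierCoeffOn_sum {ι : Type*} (s : Finset ι) {f : ι → ℝ → ℂ}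
    (hf : ∀ i ∈ s, IntervalIntegrable (f i) volume a b) (n : ℤ) :
    fourierCoeffOn hab (∑ i ∈ s, f i) n = ∑ i ∈ s, fourierCoeffOn hab (f i) n := by
  simp only [fourierCoeffOn_eq_integral, Finset.sum_apply, Finset.smul_sum]
  rw [intervalIntegral.integral_finsetSum, Finset.smul_sum]
  exact fun i hi ↦ (hf i hi).continuousOn_mul (by fun_prop)

theorem fourierCoeffOn_deriv_of_eq_endpoints {f f' : ℝ → ℂ}
    (hf : ∀ x ∈ [[a, b]], HasDerivAt f (f' x) x) (hf' : IntervalIntegrable f' volume a b)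
    (hfab : f a = f b) (n : ℤ) :
    fourierCoeffOn hab f' n = 2 * π * I * n / (b - a) * fourierCoeffOn hab f n := by
  rcases eq_or_ne n 0 with rfl | hn
  · simp [fourierCoeffOn_eq_integral, intervalIntegral.integral_eq_sub_of_hasDerivAt hf hf', hfab]
  · have hba : (b - a : ℂ) ≠ 0 := by exact_mod_cast (sub_pos.2 hab).ne'
    rw [fourierCoeffOn_of_hasDerivAt hab hn hf hf', ← hfab, sub_self, mul_zero, zero_sub]
    field_simp

theorem fourierCoeffOn_iteratedDeriv {k : ℕ} {f : ℝ → ℝ} (hf : ContDiff ℝ k f)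
    (hper : Periodic f (b - a)) {j : ℕ} (hj : j ≤ k) (n : ℤ) :
    fourierCoeffOn hab (fun x ↦ ((iteratedDeriv j f x : ℝ) : ℂ)) n =
      (2 * π * I * n / (b - a)) ^ j * fourierCoeffOn hab (fun x ↦ (f x : ℂ)) n := by
  induction j with
  | zero => simp
  | succ j ih =>
    have hdiff : Differentiable ℝ (iteratedDeriv j f) :=
      hf.differentiable_iteratedDeriv j (by exact_mod_cast hj)
    have hcont : Continuous (deriv (iteratedDeriv j f)) :=
      iteratedDeriv_succ (f := f) ▸ hf.continuous_iteratedDeriv _ (by exact_mod_cast hj)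
    have hend : ((iteratedDeriv j f a : ℝ) : ℂ) = (iteratedDeriv j f b : ℝ) := by
      simpa using congrArg ((↑) : ℝ → ℂ) ((hper.iteratedDeriv j a).symm)
    rw [pow_succ', mul_assoc, ← ih (by omega), iteratedDeriv_succ]
    exact fourierCoeffOn_deriv_of_eq_endpoints hab (fun x _ ↦ (hdiff x).hasDerivAt.ofReal_comp)
      ((continuous_ofReal.comp hcont).intervalIntegrable a b) hend n

theorem fourierCoeffOn_sum_smul_iteratedDeriv {k : ℕ} {f : ℝ → ℝ} (hf : ContDiff ℝ k f)
    (hper : Periodic f (b - a)) (c : Fin (k + 1) → ℂ) (n : ℤ) :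
    fourierCoeffOn hab (∑ j : Fin (k + 1), c j • fun x ↦ ((iteratedDeriv j f x : ℝ) : ℂ)) n =
      (∑ j : Fin (k + 1), c j * (2 * π * I * n / (b - a)) ^ (j : ℕ)) *
        fourierCoeffOn hab (fun x ↦ (f x : ℂ)) n := by
  have hint (j : Fin (k + 1)) :
      IntervalIntegrable (c j • fun x ↦ ((iteratedDeriv j f x : ℝ) : ℂ)) volume a b := by
    have hcont := hf.continuous_iteratedDeriv j (by exact_mod_cast Nat.lt_succ_iff.1 j.2)
    exact (Continuous.const_smul (by fun_prop) (c j)).intervalIntegrable a b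
  rw [fourierCoeffOn_sum hab _ fun j _ ↦ hint j, Finset.sum_mul]
  refine Finset.sum_congr rfl fun j _ ↦ ?_
  rw [fourierCoeffOn.const_smul, fourierCoeffOn_iteratedDeriv hab hf hper (Nat.lt_succ_iff.1 j.2),
    smul_eq_mul]
  ring

theorem sum_smul_iteratedDeriv_eq_zero_iff {k : ℕ} {f : ℝ → ℝ} (hf : ContDiff ℝ k f)
    (hper : Periodic f (b - a)) (c : Fin (k + 1) → ℂ) :
    ∑ j : Fin (k + 1), c j • (fun x ↦ ((iteratedDeriv j f x : ℝ) : ℂ)) = 0 ↔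
      ∀ n : ℤ, fourierCoeffOn hab (fun x ↦ (f x : ℂ)) n ≠ 0 →
        ∑ j : Fin (k + 1), c j * (2 * π * I * n / (b - a)) ^ (j : ℕ) = 0 := by
  have hcoeff := fourierCoeffOn_sum_smul_iteratedDeriv hab hf hper c
  constructor
  · intro h n hn
    have hzero : fourierCoeffOn hab (0 : ℝ → ℂ) n = 0 := by simp [fourierCoeffOn_eq_integral]
    rw [← h, hcoeff] at hzero
    exact (mul_eq_zero.1 hzero).resolve_right hn
  · intro h
    have hcont (j : Fin (k + 1)) : Continuous (iteratedDeriv j f) :=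
      hf.continuous_iteratedDeriv j (by exact_mod_cast Nat.lt_succ_iff.1 j.2)
    have hper' : Periodic (∑ j : Fin (k + 1), c j • fun x ↦ ((iteratedDeriv j f x : ℝ) : ℂ))
        (b - a) := fun x ↦ by
      simp only [Finset.sum_apply, Pi.smul_apply, hper.iteratedDeriv _ x]
    refine hper'.eq_zero_of_fourierCoeffOn_eq_zero hab
      (by rw [Finset.sum_fn]; fun_prop) fun n ↦ ?_
    rw [hcoeff]
    by_cases hn : fourierCoeffOn hab (fun x ↦ (f x : ℂ)) n = 0
    · rw [hn, mul_zero]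
    · rw [h n hn, zero_mul]

theorem linearIndependent_iteratedDeriv_iff {k : ℕ} {f : ℝ → ℝ} (hf : ContDiff ℝ k f)
    (hper : Periodic f (b - a)) :
    LinearIndependent ℝ (fun j : Fin (k + 1) ↦ iteratedDeriv j f) ↔
      ∃ s : Finset ℤ, k + 1 ≤ s.card ∧ ∀ n ∈ s, fourierCoeffOn hab (fun x ↦ (f x : ℂ)) n ≠ 0 := by
  have hfreq : Injective fun n : ℤ ↦ 2 * π * I * n / (b - a) := fun m n h ↦ by
    have hba : (b - a : ℂ) ≠ 0 := by exact_mod_cast (sub_pos.2 hab).ne'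
    simpa [hba, pi_ne_zero, I_ne_zero] using h
  rw [← linearIndependent_ofReal_comp_iff, Fintype.linearIndependent_iff]
  simp_rw [sum_smul_iteratedDeriv_eq_zero_iff hab hf hper]
  exact forall_sum_mul_pow_eq_zero_iff hfreq _ _

end FourierCoeffOn

/-- For a C^k periodic kernel on the torus, the derivatives (phi, phi', ..., phi^(k))
are linearly independent in L^2 iff phi has at least k+1 nonzero Fourier coefficients. -/
theorem derivatives_linearIndependent_iff_fourier (k : ℕ) (phi : ℝ → ℝ)
    (hsmooth : ContDiff ℝ ((k : ℕ) : ℕ∞) phi)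
    (hper : Function.Periodic phi 1) :
    LinearIndependent ℝ (fun j : Fin (k+1) => iteratedDeriv (j : ℕ) phi) ↔
      ∃ s : Finset ℤ, k + 1 ≤ s.card ∧ ∀ n ∈ s,
        (∫ x in (0:ℝ)..1,
          (phi x : ℂ) * Complex.exp (-(2 * Real.pi * (n : ℝ) * x : ℝ) * Complex.I)) ≠ 0 := by
  simp_rw [← fourierCoeffOn_zero_one_eq_integral]
  exact linearIndependent_iteratedDeriv_iff zero_lt_one hsmooth (by simpa using hper)
end
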